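/- arXiv:2101.08710 — 2 statements merged into one kernel-verified Lean document; each statement's English description precedes it below -/
import Mathlib

section
/- Let J be an ideal of S = K[x_1,...,x_n] with a fixed monomial order, and let f ∈ S be a nonzero polynomial that is a nonzerodivisor on S/J. Then in(J + (f)) = in(J) + (in(f)) if and only if the monomial in(f) is a nonzerodivisor on S/in(J). -/
open MvPolynomial

variable {K : Type*} [Field K] {n : ℕ}

/-- The leading monomial (exponent vector) of a polynomial with respect to a monomial
order `m`: the maximum of the support; by convention `lm m 0 = 0`. -/
noncomputable def lm (m : MonomialOrder (Fin n)) (f : MvPolynomial (Fin n) K) :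
    Fin n →₀ ℕ :=
  m.toSyn.symm (f.support.sup fun d => m.toSyn d)

/-- The initial ideal of `I`: the ideal generated by the leading monomials of the
nonzero elements of `I`. -/
noncomputable def initialIdeal (m : MonomialOrder (Fin n))
    (I : Ideal (MvPolynomial (Fin n) K)) : Ideal (MvPolynomial (Fin n) K) :=
  Ideal.span {p | ∃ f ∈ I, f ≠ 0 ∧ p = monomial (lm m f) (1 : K)}

/-- `G` is a Gröbner basis of `I`: a finite set of nonzero polynomials generating `I`
whose leading monomials generate the initial ideal of `I`. -/
def IsGroebnerBasis (m : MonomialOrder (Fin n)) (I : Ideal (MvPolynomial (Fin n) K))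
    (G : Set (MvPolynomial (Fin n) K)) : Prop :=
  G.Finite ∧ (0 : MvPolynomial (Fin n) K) ∉ G ∧ Ideal.span G = I ∧
    Ideal.span ((fun g => monomial (lm m g) (1 : K)) '' G) = initialIdeal m I

/-- The S-polynomial `S(f,g)` with respect to the monomial order `m`. -/
noncomputable def sPoly (m : MonomialOrder (Fin n)) (f g : MvPolynomial (Fin n) K) :
    MvPolynomial (Fin n) K :=
  monomial (lm m f ⊔ lm m g - lm m f) (f.coeff (lm m f))⁻¹ * f -
    monomial (lm m f ⊔ lm m g - lm m g) (g.coeff (lm m g))⁻¹ * g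

/-- An ideal is a monomial ideal if it is generated by monomials. -/
def IsMonomialIdeal (I : Ideal (MvPolynomial (Fin n) K)) : Prop :=
  ∃ M : Set (Fin n →₀ ℕ), I = Ideal.span ((fun μ => (monomial μ (1 : K))) '' M)

/-! Write `g = j + p f` with `j ∈ J`. If `in(f)` is regular modulo `in(J)`, reduce `p` by
elements of `J` with the same leading term (absorbing `q f` into `j`) until `in(p) ∉ in(J)`;
then `in(p f) ∉ in(J)`, so `in(j)` and `in(p f)` cannot cancel and `in(g)` is one of them.
Conversely, if `in(f)·x^b ∈ in(J)`, pick `j ∈ J` with the leading term of `x^b f`; then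
`x^b f - j` has lower degree than `x^b f`. Reducing such a combination `j + p f` by
`in(J + (f)) = in(J) + (in f)` lowers its degree while keeping the leading term of `p`, and
ends at `j + p f = 0`, where `p ∈ J` because `f` is regular modulo `J`; so `x^b ∈ in(J)`. -/

open MonomialOrder

namespace MonomialOrder

variable {σ : Type*} {m : MonomialOrder σ}

theorem withBotDegree_sub_lt_of_leadingTerm_eq {R : Type*} [CommRing R]
    {f g : MvPolynomial σ R} (h : m.leadingTerm f = m.leadingTerm g) (hf : f ≠ 0) :
    m.withBotDegree (f - g) ≺'[m] m.withBotDegree f := by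
  rw [withBotDegree_lt_withBotDegree_iff]
  by_cases hfg : f - g = 0
  · exact Or.inr ⟨hfg, hf⟩
  obtain ⟨hc, hd⟩ := leadingTerm_eq_leadingTerm_iff.mp h
  refine Or.inl (lt_of_le_of_ne ?_ fun he => ?_)
  · simpa [hd] using m.degree_sub_le (f := f) (g := g)
  · apply m.coeff_degree_ne_zero_iff.mpr hfg
    rw [m.toSyn.injective he, coeff_sub, ← leadingCoeff, hd, ← leadingCoeff, hc, sub_self]

theorem leadingTerm_monomial_mul_of_le {K : Type*} [Field K] {g : MvPolynomial σ K}
    (hg : g ≠ 0) {ν : σ →₀ ℕ} (hν : m.degree g ≤ ν) (c : K) :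
    m.leadingTerm (monomial (ν - m.degree g) (c / m.leadingCoeff g) * g) = monomial ν c := by
  rw [leadingTerm_mul, leadingTerm_monomial, leadingTerm, monomial_mul,
    tsub_add_cancel_of_le hν, div_mul_cancel₀ _ (m.leadingCoeff_ne_zero_iff.mpr hg)]

end MonomialOrder

theorem MvPolynomial.monomial_one_mem_span_monomial_image_iff {σ R : Type*} [CommSemiring R]
    [Nontrivial R] {M : Set (σ →₀ ℕ)} {ν : σ →₀ ℕ} :
    monomial ν (1 : R) ∈ Ideal.span ((fun μ => monomial μ (1 : R)) '' M) ↔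
      ∃ μ ∈ M, μ ≤ ν := by
  classical
  simp [mem_ideal_span_monomial_image, support_monomial]

section MonomialIdeal

variable {I I' : Ideal (MvPolynomial (Fin n) K)}

theorem isMonomialIdeal_span_monomial (μ : Fin n →₀ ℕ) :
    IsMonomialIdeal (Ideal.span {monomial μ (1 : K)}) :=
  ⟨{μ}, by rw [Set.image_singleton]⟩

theorem IsMonomialIdeal.monomial_mem_sup_iff (hI : IsMonomialIdeal I) (hI' : IsMonomialIdeal I')
    {ν : Fin n →₀ ℕ} :
    monomial ν (1 : K) ∈ I ⊔ I' ↔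
      monomial ν (1 : K) ∈ I ∨ monomial ν (1 : K) ∈ I' := by
  obtain ⟨M, rfl⟩ := hI
  obtain ⟨M', rfl⟩ := hI'
  simp only [← Ideal.span_union, ← Set.image_union, monomial_one_mem_span_monomial_image_iff,
    Set.mem_union, or_and_right, exists_or]

theorem IsMonomialIdeal.isSMulRegular_monomial (hI : IsMonomialIdeal I) {a : Fin n →₀ ℕ}
    (h : ∀ b, monomial (a + b) (1 : K) ∈ I → monomial b (1 : K) ∈ I) :
    IsSMulRegular (MvPolynomial (Fin n) K ⧸ I) (monomial a (1 : K)) := by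
  obtain ⟨M, rfl⟩ := hI
  rw [isSMulRegular_quotient_iff_mem_of_smul_mem]
  intro g hg
  rw [mem_ideal_span_monomial_image] at hg ⊢
  intro b hb
  have hab : a + b ∈ (monomial a (1 : K) • g).support := by
    simpa [coeff_monomial_mul] using hb
  rw [← monomial_one_mem_span_monomial_image_iff (R := K)]
  exact h b (monomial_one_mem_span_monomial_image_iff.mpr (hg _ hab))

end MonomialIdeal

section InitialIdeal

variable {m : MonomialOrder (Fin n)} {I J : Ideal (MvPolynomial (Fin n) K)}
  {f : MvPolynomial (Fin n) K}

theorem lm_eq_degree (f : MvPolynomial (Fin n) K) : lm m f = m.degree f := rfl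

theorem initialIdeal_eq_span (I : Ideal (MvPolynomial (Fin n) K)) :
    initialIdeal m I =
      Ideal.span ((fun a => monomial a (1 : K)) ''
        (m.degree '' ((I : Set (MvPolynomial (Fin n) K)) \ {0}))) := by
  rw [initialIdeal, Set.image_image]
  congr 1
  ext p
  simp [lm_eq_degree, eq_comm, and_assoc]

theorem isMonomialIdeal_initialIdeal (I : Ideal (MvPolynomial (Fin n) K)) :
    IsMonomialIdeal (initialIdeal m I) :=
  ⟨_, initialIdeal_eq_span I⟩

theorem initialIdeal_mono (h : I ≤ J) : initialIdeal m I ≤ initialIdeal m J :=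
  Ideal.span_mono fun _ ⟨g, hg, hg0, hp⟩ => ⟨g, h hg, hg0, hp⟩

theorem monomial_degree_mem_initialIdeal {g : MvPolynomial (Fin n) K} (hg : g ∈ I)
    (hg0 : g ≠ 0) :
    monomial (m.degree g) (1 : K) ∈ initialIdeal m I :=
  Ideal.subset_span ⟨g, hg, hg0, rfl⟩

theorem exists_leadingTerm_eq_of_monomial_mem_initialIdeal {ν : Fin n →₀ ℕ}
    (h : monomial ν (1 : K) ∈ initialIdeal m I) (c : K) :
    ∃ g ∈ I, m.leadingTerm g = monomial ν c := by
  rw [initialIdeal_eq_span, monomial_one_mem_span_monomial_image_iff] at h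
  obtain ⟨_, ⟨g, ⟨hg, hg0⟩, rfl⟩, hle⟩ := h
  exact ⟨_, I.mul_mem_left _ hg, leadingTerm_monomial_mul_of_le hg0 hle c⟩

theorem monomial_degree_mem_initialIdeal_sup_of_isSMulRegular (hf : f ≠ 0)
    (hreg : IsSMulRegular (MvPolynomial (Fin n) K ⧸ initialIdeal m J)
      (monomial (m.degree f) (1 : K)))
    {j p : MvPolynomial (Fin n) K} (hj : j ∈ J) (hg : j + p * f ≠ 0) :
    monomial (m.degree (j + p * f)) (1 : K) ∈
      initialIdeal m J ⊔ Ideal.span {monomial (m.degree f) (1 : K)} := by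
  generalize hs : m.toWithBotSyn (m.withBotDegree p) = s
  induction s using WellFoundedLT.induction generalizing p j with
  | ind s IH =>
  subst hs
  rcases eq_or_ne p 0 with rfl | hp
  · simpa using Ideal.mem_sup_left (monomial_degree_mem_initialIdeal hj (by simpa using hg))
  by_cases hpJ : monomial (m.degree p) (1 : K) ∈ initialIdeal m J
  · obtain ⟨q, hq, hqp⟩ :=
      exists_leadingTerm_eq_of_monomial_mem_initialIdeal hpJ (m.leadingCoeff p)
    have hrepr : j + p * f = (j + q * f) + (p - q) * f := by ring
    rw [hrepr] at hg ⊢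
    exact IH _ (withBotDegree_sub_lt_of_leadingTerm_eq hqp.symm hp)
      (J.add_mem hj (J.mul_mem_right f hq)) hg rfl
  · have hpf : monomial (m.degree (p * f)) (1 : K) ∈
        Ideal.span {monomial (m.degree f) (1 : K)} := by
      rw [Ideal.mem_span_singleton, m.degree_mul hp hf]
      exact ⟨monomial (m.degree p) 1, by rw [monomial_mul, one_mul, add_comm]⟩
    have hpfJ : monomial (m.degree (p * f)) (1 : K) ∉ initialIdeal m J := fun h => hpJ <|
      mem_of_isSMulRegular_quotient_of_smul_mem hreg (by
        rwa [smul_eq_mul, monomial_mul, one_mul, add_comm, ← m.degree_mul hp hf])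
    rcases eq_or_ne j 0 with rfl | hj0
    · simpa using Ideal.mem_sup_right hpf
    have hne : m.toSyn (m.degree j) ≠ m.toSyn (m.degree (p * f)) := fun h =>
      hpfJ (m.toSyn.injective h ▸ monomial_degree_mem_initialIdeal hj hj0)
    rcases hne.lt_or_gt with hlt | hlt
    · rw [degree_add_eq_right_of_lt hlt]
      exact Ideal.mem_sup_right hpf
    · rw [degree_add_of_lt hlt]
      exact Ideal.mem_sup_left (monomial_degree_mem_initialIdeal hj hj0)

theorem monomial_degree_mem_initialIdeal_of_initialIdeal_sup_eq (hf : f ≠ 0)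
    (hreg : IsSMulRegular (MvPolynomial (Fin n) K ⧸ J) f)
    (E : initialIdeal m (J ⊔ Ideal.span {f}) =
      initialIdeal m J ⊔ Ideal.span {monomial (m.degree f) (1 : K)})
    {j p : MvPolynomial (Fin n) K} (hj : j ∈ J) (hp : p ≠ 0)
    (hlt : m.withBotDegree (j + p * f) ≺'[m] m.withBotDegree (p * f)) :
    monomial (m.degree p) (1 : K) ∈ initialIdeal m J := by
  generalize hs : m.toWithBotSyn (m.withBotDegree (j + p * f)) = s
  induction s using WellFoundedLT.induction generalizing p j with
  | ind s IH =>
  subst hs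
  set g := j + p * f with hg_def
  rcases eq_or_ne g 0 with hg0 | hg0
  · have hpJ : p ∈ J := mem_of_isSMulRegular_quotient_of_smul_mem hreg (by
      rw [smul_eq_mul, mul_comm, eq_neg_of_add_eq_zero_right hg0]
      exact J.neg_mem hj)
    exact monomial_degree_mem_initialIdeal hpJ hp
  have hgJf : g ∈ J ⊔ Ideal.span {f} :=
    J.add_mem_sup hj (Ideal.mul_mem_left _ p (Ideal.mem_span_singleton_self f))
  have hmem := monomial_degree_mem_initialIdeal (m := m) hgJf hg0
  rw [E, (isMonomialIdeal_initialIdeal J).monomial_mem_sup_iff (isMonomialIdeal_span_monomial _),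
    Ideal.mem_span_singleton, monomial_one_dvd_monomial_one] at hmem
  rcases hmem with hgJ | hle
  · obtain ⟨j', hj', hj'g⟩ := exists_leadingTerm_eq_of_monomial_mem_initialIdeal hgJ
      (m.leadingCoeff g)
    have hdrop := withBotDegree_sub_lt_of_leadingTerm_eq hj'g.symm hg0
    have hrepr : g - j' = (j - j') + p * f := by rw [hg_def]; ring
    rw [hrepr] at hdrop
    exact IH _ hdrop (J.sub_mem hj hj') hp (hdrop.trans hlt) rfl
  · set q := monomial (m.degree g - m.degree f) (m.leadingCoeff g / m.leadingCoeff f)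
    have hqf : m.leadingTerm (q * f) = m.leadingTerm g := leadingTerm_monomial_mul_of_le hf hle _
    have hq0 : q ≠ 0 := by
      rintro hq
      rw [hq, zero_mul, leadingTerm_zero, eq_comm, leadingTerm_eq_zero_iff] at hqf
      exact hg0 hqf
    have hqp : m.degree q ≺[m] m.degree p := by
      refine degree_lt_of_left_ne_zero_of_degree_mul_lt (q := f) hq0 ?_
      rw [← degree_leadingTerm, hqf, degree_leadingTerm]
      exact (withBotDegree_lt_withBotDegree_iff_of_ne_zero _ hg0).mp hlt
    have hpq : m.leadingTerm (p - q) = m.leadingTerm p :=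
      leadingTerm_eq_leadingTerm_iff.mpr ⟨leadingCoeff_sub_of_lt hqp, degree_sub_of_lt hqp⟩
    have hpq0 : p - q ≠ 0 := by
      rwa [Ne, ← leadingTerm_eq_zero_iff (m := m), hpq, leadingTerm_eq_zero_iff]
    have hpqf : m.withBotDegree ((p - q) * f) = m.withBotDegree (p * f) := by
      rw [← withBotDegree_leadingTerm, leadingTerm_mul, hpq, ← leadingTerm_mul,
        withBotDegree_leadingTerm]
    have hdrop := withBotDegree_sub_lt_of_leadingTerm_eq hqf.symm hg0
    have hrepr : g - q * f = j + (p - q) * f := by rw [hg_def]; ring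
    rw [hrepr] at hdrop
    have hmem := IH _ hdrop hj hpq0 (by rw [hpqf]; exact hdrop.trans hlt) rfl
    rwa [← degree_leadingTerm, hpq, degree_leadingTerm] at hmem

theorem initialIdeal_sup_span_le_of_isSMulRegular (hf : f ≠ 0)
    (hreg : IsSMulRegular (MvPolynomial (Fin n) K ⧸ initialIdeal m J)
      (monomial (m.degree f) (1 : K))) :
    initialIdeal m (J ⊔ Ideal.span {f}) ≤
      initialIdeal m J ⊔ Ideal.span {monomial (m.degree f) (1 : K)} := by
  refine Ideal.span_le.mpr ?_
  rintro _ ⟨g, hg, hg0, rfl⟩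
  obtain ⟨j, hj, _, hz, rfl⟩ := Submodule.mem_sup.mp hg
  obtain ⟨p, rfl⟩ := Ideal.mem_span_singleton'.mp hz
  exact monomial_degree_mem_initialIdeal_sup_of_isSMulRegular hf hreg hj hg0

theorem initialIdeal_sup_span_le (hf : f ≠ 0) :
    initialIdeal m J ⊔ Ideal.span {monomial (m.degree f) (1 : K)} ≤
      initialIdeal m (J ⊔ Ideal.span {f}) :=
  sup_le (initialIdeal_mono le_sup_left) <| Ideal.span_le.mpr <| Set.singleton_subset_iff.mpr <|
    monomial_degree_mem_initialIdeal (Ideal.mem_sup_right (Ideal.mem_span_singleton_self f)) hf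

theorem isSMulRegular_of_initialIdeal_sup_span_eq (hf : f ≠ 0)
    (hreg : IsSMulRegular (MvPolynomial (Fin n) K ⧸ J) f)
    (E : initialIdeal m (J ⊔ Ideal.span {f}) =
      initialIdeal m J ⊔ Ideal.span {monomial (m.degree f) (1 : K)}) :
    IsSMulRegular (MvPolynomial (Fin n) K ⧸ initialIdeal m J)
      (monomial (m.degree f) (1 : K)) := by
  refine (isMonomialIdeal_initialIdeal J).isSMulRegular_monomial fun b hb => ?_
  obtain ⟨j, hj, hjf⟩ :=
    exists_leadingTerm_eq_of_monomial_mem_initialIdeal hb (m.leadingCoeff f)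
  have hbf : m.leadingTerm (monomial b 1 * f) = m.leadingTerm j := by
    rw [hjf, leadingTerm_mul, leadingTerm_monomial, leadingTerm, monomial_mul, one_mul, add_comm]
  have hb0 : monomial b (1 : K) ≠ 0 := monomial_eq_zero.not.mpr one_ne_zero
  have hlt := withBotDegree_sub_lt_of_leadingTerm_eq hbf (mul_ne_zero hb0 hf)
  rw [sub_eq_neg_add] at hlt
  have hdeg : m.degree (monomial b (1 : K)) = b := by classical simp [degree_monomial]
  simpa [hdeg] using
    monomial_degree_mem_initialIdeal_of_initialIdeal_sup_eq hf hreg E (J.neg_mem hj) hb0 hlt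

end InitialIdeal

/-- For `f` a nonzero polynomial, regular on `S/J`:
`in(J + (f)) = in(J) + (in(f))` iff `in(f)` is regular on `S/in(J)`. -/
theorem stmt7 (m : MonomialOrder (Fin n)) (J : Ideal (MvPolynomial (Fin n) K))
    (f : MvPolynomial (Fin n) K) (hf : f ≠ 0)
    (hreg : IsSMulRegular (MvPolynomial (Fin n) K ⧸ J) f) :
    initialIdeal m (J + Ideal.span {f}) =
        initialIdeal m J + Ideal.span {(monomial (lm m f) (1 : K))} ↔
      IsSMulRegular (MvPolynomial (Fin n) K ⧸ initialIdeal m J)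
        ((monomial (lm m f) (1 : K)) : MvPolynomial (Fin n) K) := by
  simp only [lm_eq_degree, Submodule.add_eq_sup]
  exact ⟨isSMulRegular_of_initialIdeal_sup_span_eq hf hreg, fun hreg' =>
    (initialIdeal_sup_span_le_of_isSMulRegular hf hreg').antisymm (initialIdeal_sup_span_le hf)⟩
end

section
/- Let E_1, ..., E_m be ideals of S = K[x_1,...,x_n] with a fixed monomial order such that in(E_i + E_j) = in(E_i) + in(E_j) for all 1 ≤ i, j ≤ m. Then for any subset X ⊆ {1,...,m}, setting E_X = Σ_{i∈X} E_i and E_{X^c} = Σ_{j∉X} E_j, one has in(E_X + E_{X^c}) = in(E_X) + in(E_{X^c}). -/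
open MvPolynomial

variable {K : Type*} [Field K] {n : ℕ}

/-!
Write `f = ∑ aᵢ` with `aᵢ ∈ Eᵢ`, and let `d` be the largest leading monomial of the `aᵢ`, attained
by `a_{i₀}`. If `d` cancels in the sum, then each `aⱼ - (cⱼ / c_{i₀}) • a_{i₀}`, where `cᵢ` is the
coefficient of `d` in `aᵢ`, lies in `Eⱼ + E_{i₀}` and only has monomials below `d`. Niceness of the
pair `(Eⱼ, E_{i₀})` splits it as `pⱼ + qⱼ` with `pⱼ ∈ Eⱼ`, `qⱼ ∈ E_{i₀}`, both below `d`, and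
regrouping gives a representation of `f` with a smaller top monomial. By well-founded induction the
leading monomial of `f` is that of some `aᵢ`, so `in(∑ Eᵢ) = ∑ in(Eᵢ)`; splitting this sum along
`X` gives the statement.
-/

namespace MonomialOrder

variable {σ : Type*} {m : MonomialOrder σ}

section CommSemiring

variable {R : Type*} [CommSemiring R]

theorem withBotDegree_lt_of_degree_le {p : MvPolynomial σ R}
    {d : σ →₀ ℕ} (hp : m.degree p ≼[m] d) (hd : p.coeff d = 0) :
    m.withBotDegree p ≺'[m] d := by
  rcases eq_or_ne p 0 with rfl | hp0
  · simp [bot_lt_iff_ne_bot]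
  rw [(withBotDegree_eq_coe_degree_iff p).mpr hp0, toWithBotSyn_apply_coe,
    toWithBotSyn_apply_coe, WithBot.coe_lt_coe]
  refine lt_of_le_of_ne hp fun h => ?_
  rw [← m.toSyn.injective h, ← leadingCoeff] at hd
  exact hp0 (leadingCoeff_eq_zero_iff.mp hd)

theorem degree_monomial_mul_le_of_le {f g : MvPolynomial σ R} (c : R)
    (hfg : m.degree f ≤ m.degree g) :
    m.degree (monomial (m.degree g - m.degree f) c * f) ≼[m] m.degree g := by
  refine degree_mul_le.trans ?_
  conv_rhs => rw [← tsub_add_cancel_of_le hfg]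
  rw [map_add, map_add]
  exact add_le_add_left (degree_monomial_le (m := m) c) _

end CommSemiring

theorem withBotDegree_sub_monomial_mul_lt {f g : MvPolynomial σ K} (hf : f ≠ 0) (hg : g ≠ 0)
    (hfg : m.degree f ≤ m.degree g) :
    m.withBotDegree
        (g - monomial (m.degree g - m.degree f) (m.leadingCoeff g / m.leadingCoeff f) * f) ≺'[m]
      m.withBotDegree g := by
  rw [(withBotDegree_eq_coe_degree_iff g).mpr hg]
  apply withBotDegree_lt_of_degree_le
  · exact degree_sub_le.trans (sup_le le_rfl (degree_monomial_mul_le_of_le _ hfg))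
  · have h := coeff_monomial_mul' (m.degree g) (m.degree g - m.degree f)
      (m.leadingCoeff g / m.leadingCoeff f) f
    rw [if_pos tsub_le_self, tsub_tsub_cancel_of_le hfg] at h
    rw [coeff_sub, h, sub_eq_zero]
    exact (div_mul_cancel₀ _ (leadingCoeff_ne_zero_iff.mpr hf)).symm

end MonomialOrder

def GroebnerNice (mo : MonomialOrder (Fin n)) (I J : Ideal (MvPolynomial (Fin n) K)) : Prop :=
  initialIdeal mo (I + J) = initialIdeal mo I + initialIdeal mo J

section InitialIdeal

open MonomialOrder

variable {mo : MonomialOrder (Fin n)}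

-- `lm mo f` is definitionally `mo.degree f`, so Mathlib's `degree` API applies throughout.
theorem monomial_degree_mem_initialIdeal_s13 {I : Ideal (MvPolynomial (Fin n) K)}
    {f : MvPolynomial (Fin n) K} (hf : f ∈ I) (hf0 : f ≠ 0) :
    monomial (mo.degree f) (1 : K) ∈ initialIdeal mo I :=
  Ideal.subset_span ⟨f, hf, hf0, rfl⟩

theorem initialIdeal_mono_s13 {I J : Ideal (MvPolynomial (Fin n) K)} (h : I ≤ J) :
    initialIdeal mo I ≤ initialIdeal mo J :=
  Ideal.span_mono fun _ ⟨f, hf, hf0, hp⟩ => ⟨f, h hf, hf0, hp⟩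

theorem add_initialIdeal_le_initialIdeal_add (I J : Ideal (MvPolynomial (Fin n) K)) :
    initialIdeal mo I + initialIdeal mo J ≤ initialIdeal mo (I + J) :=
  sup_le (initialIdeal_mono_s13 le_sup_left) (initialIdeal_mono_s13 le_sup_right)

theorem sum_initialIdeal_le_initialIdeal_sum {ι : Type*} (s : Finset ι)
    (E : ι → Ideal (MvPolynomial (Fin n) K)) :
    ∑ i ∈ s, initialIdeal mo (E i) ≤ initialIdeal mo (∑ i ∈ s, E i) := by
  rw [Ideal.sum_eq_sup, Ideal.sum_eq_sup]
  exact Finset.sup_le fun i hi => initialIdeal_mono_s13 (Finset.le_sup (f := E) hi)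

theorem initialIdeal_eq_span_monomial (I : Ideal (MvPolynomial (Fin n) K)) :
    initialIdeal mo I =
      Ideal.span ((fun d => monomial d (1 : K)) '' {d | ∃ f ∈ I, f ≠ 0 ∧ mo.degree f = d}) := by
  unfold initialIdeal
  congr 1
  ext p
  simp only [Set.mem_image]
  constructor
  · rintro ⟨f, hf, hf0, rfl⟩
    exact ⟨_, ⟨f, hf, hf0, rfl⟩, rfl⟩
  · rintro ⟨_, ⟨f, hf, hf0, rfl⟩, rfl⟩
    exact ⟨f, hf, hf0, rfl⟩

theorem exists_degree_le_of_monomial_mem_initialIdeal_add {A B : Ideal (MvPolynomial (Fin n) K)}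
    {d : Fin n →₀ ℕ} (hd : monomial d (1 : K) ∈ initialIdeal mo A + initialIdeal mo B) :
    ∃ f, (f ∈ A ∨ f ∈ B) ∧ f ≠ 0 ∧ mo.degree f ≤ d := by
  rw [initialIdeal_eq_span_monomial, initialIdeal_eq_span_monomial, Submodule.add_eq_sup,
    ← Ideal.span_union, ← Set.image_union, mem_ideal_span_monomial_image] at hd
  obtain ⟨e, he, hed⟩ := hd d (by simp)
  rcases he with ⟨f, hf, hf0, rfl⟩ | ⟨f, hf, hf0, rfl⟩
  exacts [⟨f, .inl hf, hf0, hed⟩, ⟨f, .inr hf, hf0, hed⟩]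

-- Measured by `withBotDegree`, so that reducing a nonzero constant to `0` counts as a descent.
theorem GroebnerNice.exists_add_eq {A B : Ideal (MvPolynomial (Fin n) K)}
    (h : GroebnerNice mo A B) {g : MvPolynomial (Fin n) K} (hg : g ∈ A + B) :
    ∃ a ∈ A, ∃ b ∈ B, a + b = g ∧ mo.withBotDegree a ≼'[mo] mo.withBotDegree g ∧
      mo.withBotDegree b ≼'[mo] mo.withBotDegree g := by
  induction g using
    (InvImage.wf (fun g => mo.toWithBotSyn (mo.withBotDegree g)) wellFounded_lt).induction with
  | _ g IH =>
  rcases eq_or_ne g 0 with rfl | hg0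
  · exact ⟨0, A.zero_mem, 0, B.zero_mem, add_zero 0, le_rfl, le_rfl⟩
  obtain ⟨f, hfAB, hf0, hfg⟩ :=
    exists_degree_le_of_monomial_mem_initialIdeal_add (h ▸ monomial_degree_mem_initialIdeal_s13 hg hg0)
  set t := monomial (mo.degree g - mo.degree f) (mo.leadingCoeff g / mo.leadingCoeff f) * f
  have hlt : mo.withBotDegree (g - t) ≺'[mo] mo.withBotDegree g :=
    withBotDegree_sub_monomial_mul_lt hf0 hg0 hfg
  have ht : mo.withBotDegree t ≼'[mo] mo.withBotDegree g :=
    (withBotDegree_le_withBotDegree_iff_of_ne_zero _ hg0).mpr (degree_monomial_mul_le_of_le _ hfg)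
  rcases hfAB with hfA | hfB
  · obtain ⟨a, ha, b, hb, hab, hag, hbg⟩ :=
      IH (g - t) hlt (sub_mem hg (Submodule.mem_sup_left (A.mul_mem_left _ hfA)))
    refine ⟨a + t, A.add_mem ha (A.mul_mem_left _ hfA), b, hb, ?_,
      (withBotDegree_add_le a t).trans (max_le (hag.trans hlt.le) ht), hbg.trans hlt.le⟩
    rw [add_right_comm, hab, sub_add_cancel]
  · obtain ⟨a, ha, b, hb, hab, hag, hbg⟩ :=
      IH (g - t) hlt (sub_mem hg (Submodule.mem_sup_right (B.mul_mem_left _ hfB)))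
    refine ⟨a, ha, b + t, B.add_mem hb (B.mul_mem_left _ hfB), ?_, hag.trans hlt.le,
      (withBotDegree_add_le b t).trans (max_le (hbg.trans hlt.le) ht)⟩
    rw [← add_assoc, hab, sub_add_cancel]

variable {ι : Type*} [Fintype ι] {E : ι → Ideal (MvPolynomial (Fin n) K)}

theorem exists_sum_eq_withBotDegree_lt (h : ∀ i j, GroebnerNice mo (E i) (E j))
    {a : ι → MvPolynomial (Fin n) K} (ha : ∀ i, a i ∈ E i) {d : Fin n →₀ ℕ}
    (had : ∀ i, mo.degree (a i) ≼[mo] d) {i₀ : ι} (hi₀ : (a i₀).coeff d ≠ 0)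
    (hd : (∑ i, a i).coeff d = 0) :
    ∃ b : ι → MvPolynomial (Fin n) K, (∀ i, b i ∈ E i) ∧ ∑ i, b i = ∑ i, a i ∧
      ∀ i, mo.withBotDegree (b i) ≺'[mo] d := by
  classical
  set c := (a i₀).coeff d
  have hmem : ∀ j, a j - ((a j).coeff d / c) • a i₀ ∈ E j + E i₀ := fun j =>
    sub_mem (Submodule.mem_sup_left (ha j))
      (Submodule.mem_sup_right ((E i₀).smul_of_tower_mem _ (ha i₀)))
  have hlt : ∀ j, mo.withBotDegree (a j - ((a j).coeff d / c) • a i₀) ≺'[mo] d := fun j =>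
    withBotDegree_lt_of_degree_le
      (degree_sub_le.trans (sup_le (had j) (degree_smul_le.trans (had i₀))))
      (by rw [coeff_sub, coeff_smul, smul_eq_mul, div_mul_cancel₀ _ hi₀, sub_self])
  choose p hp q hq hpq hpd hqd using fun j => (h j i₀).exists_add_eq (hmem j)
  refine ⟨p + Pi.single i₀ (∑ j, q j), fun i => ?_, ?_, fun i => ?_⟩
  · rcases eq_or_ne i i₀ with rfl | hi
    · simpa using (E i).add_mem (hp i) (sum_mem fun j _ => hq j)
    · simpa [hi] using hp i
  · calc _ = ∑ j, (p j + q j) := by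
          simp only [Pi.add_apply, Finset.sum_add_distrib, Finset.sum_pi_single', Finset.mem_univ,
            if_true]
      _ = ∑ j, (a j - ((a j).coeff d / c) • a i₀) := by simp_rw [hpq]
      _ = ∑ j, a j - ((∑ j, a j).coeff d / c) • a i₀ := by
          simp [Finset.sum_sub_distrib, ← Finset.sum_smul, coeff_sum, Finset.sum_div]
      _ = ∑ j, a j := by rw [hd, zero_div, zero_smul, sub_zero]
  · refine (withBotDegree_add_le _ _).trans_lt (max_lt ((hpd i).trans_lt (hlt i)) ?_)
    rcases eq_or_ne i i₀ with rfl | hi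
    · rw [Pi.single_eq_same]
      refine withBotDegree_sum_le.trans_lt ((Finset.sup_lt_iff ?_).mpr fun j _ => ?_)
      · simp [bot_lt_iff_ne_bot]
      · exact (hqd j).trans_lt (hlt j)
    · simp [Pi.single_eq_of_ne hi, bot_lt_iff_ne_bot]

theorem monomial_degree_sum_mem_sum_initialIdeal (h : ∀ i j, GroebnerNice mo (E i) (E j))
    (a : ι → MvPolynomial (Fin n) K) (ha : ∀ i, a i ∈ E i) (hf : ∑ i, a i ≠ 0) :
    monomial (mo.degree (∑ i, a i)) (1 : K) ∈ ∑ i, initialIdeal mo (E i) := by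
  induction a using (InvImage.wf (fun a : ι → MvPolynomial (Fin n) K =>
    Finset.univ.sup fun i => mo.toWithBotSyn (mo.withBotDegree (a i))) wellFounded_lt).induction
    with
  | _ a IH =>
  obtain ⟨i, hi⟩ : ∃ i, (a i).coeff (mo.degree (∑ i, a i)) ≠ 0 := by
    by_contra! h0
    refine (leadingCoeff_ne_zero_iff (m := mo)).mpr hf ?_
    rw [leadingCoeff, coeff_sum]
    exact Finset.sum_eq_zero fun i _ => h0 i
  have hai : a i ≠ 0 := fun h0 => hi (by simp [h0])
  rcases (le_degree (mem_support_iff.mpr hi)).eq_or_lt with heq | hlt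
  · rw [mo.toSyn.injective heq]
    exact Finset.single_le_sum (f := fun i => initialIdeal mo (E i)) (fun _ _ => _root_.zero_le)
      (Finset.mem_univ i) (monomial_degree_mem_initialIdeal_s13 (ha i) hai)
  obtain ⟨i₀, -, hi₀⟩ := Finset.exists_mem_eq_sup Finset.univ ⟨i, Finset.mem_univ i⟩
    fun i => mo.toWithBotSyn (mo.withBotDegree (a i))
  have hle (j : ι) : mo.withBotDegree (a j) ≼'[mo] mo.withBotDegree (a i₀) :=
    hi₀ ▸ Finset.le_sup (f := fun i => mo.toWithBotSyn (mo.withBotDegree (a i))) (Finset.mem_univ j)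
  have had (j : ι) : mo.degree (a j) ≼[mo] mo.degree (a i₀) :=
    ((withBotDegree_le_withBotDegree_iff _ _).mp (hle j)).1
  have hai₀ : a i₀ ≠ 0 := fun h0 => hai (((withBotDegree_le_withBotDegree_iff _ _).mp (hle i)).2 h0)
  obtain ⟨b, hb, hbsum, hbd⟩ := exists_sum_eq_withBotDegree_lt h ha had
    (leadingCoeff_ne_zero_iff.mpr hai₀) (coeff_eq_zero_of_lt (hlt.trans_le (had i)))
  rw [← hbsum] at hf ⊢
  refine IH b ?_ hb hf
  change _ < Finset.univ.sup _
  rw [hi₀, (withBotDegree_eq_coe_degree_iff _).mpr hai₀]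
  exact (Finset.sup_lt_iff (by simp [bot_lt_iff_ne_bot])).mpr fun j _ => hbd j

theorem initialIdeal_sum_le_sum_initialIdeal (h : ∀ i j, GroebnerNice mo (E i) (E j)) :
    initialIdeal mo (∑ i, E i) ≤ ∑ i, initialIdeal mo (E i) := by
  refine Ideal.span_le.mpr ?_
  rintro _ ⟨f, hf, hf0, rfl⟩
  rw [Ideal.sum_eq_sup, Finset.sup_eq_iSup, Submodule.mem_iSup_finset_iff_exists_sum] at hf
  obtain ⟨a, rfl⟩ := hf
  exact monomial_degree_sum_mem_sum_initialIdeal h _ (fun i => (a i).2) hf0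

end InitialIdeal

/-- If `(E i, E j)` is a Gröbner-nice pair for all `i, j`, then for any subset `X`,
`(∑_{i∈X} E i, ∑_{j∉X} E j)` is a Gröbner-nice pair. -/
theorem stmt13 (mo : MonomialOrder (Fin n)) (m : ℕ)
    (E : Fin m → Ideal (MvPolynomial (Fin n) K))
    (h : ∀ i j, initialIdeal mo (E i + E j) = initialIdeal mo (E i) + initialIdeal mo (E j))
    (X : Finset (Fin m)) :
    initialIdeal mo ((∑ i ∈ X, E i) + ∑ j ∈ Xᶜ, E j) =
      initialIdeal mo (∑ i ∈ X, E i) + initialIdeal mo (∑ j ∈ Xᶜ, E j) := by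
  refine le_antisymm ?_ (add_initialIdeal_le_initialIdeal_add _ _)
  calc initialIdeal mo ((∑ i ∈ X, E i) + ∑ j ∈ Xᶜ, E j)
      _ = initialIdeal mo (∑ i, E i) := by rw [Finset.sum_add_sum_compl]
      _ ≤ ∑ i, initialIdeal mo (E i) := initialIdeal_sum_le_sum_initialIdeal h
      _ = (∑ i ∈ X, initialIdeal mo (E i)) + ∑ j ∈ Xᶜ, initialIdeal mo (E j) :=
        (Finset.sum_add_sum_compl X _).symm
      _ ≤ _ := add_le_add (sum_initialIdeal_le_initialIdeal_sum X E)
        (sum_initialIdeal_le_initialIdeal_sum Xᶜ E)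
end
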